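/- arXiv:1006.5652 — 3 statements merged into one kernel-verified Lean document; each statement's English description precedes it below -/
import Mathlib

section
/- For 0 < q < 1 and every complex number z with |z| < 1/(1-q), the series ∑_{n=0}^∞ z^n/[n]_q! converges and equals the infinite product ∏_{k=0}^∞ (1 - (1-q) q^k z)^{-1}. -/
/-- The q-integer `[k]_q = 1 + q + q^2 + ⋯ + q^(k-1)`. -/
noncomputable def qInt (q : ℝ) (k : ℕ) : ℝ := ∑ i ∈ Finset.range k, q ^ i

/-- The q-factorial `[n]_q! = [1]_q [2]_q ⋯ [n]_q`, with `[0]_q! = 1`. -/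
noncomputable def qFact (q : ℝ) (n : ℕ) : ℝ := ∏ k ∈ Finset.range n, qInt q (k + 1)

/-!
Write `E(z) = ∑ zⁿ/[n]_q!`. Because `(1 - q^(n+1)) / [n+1]_q! = (1 - q) / [n]_q!`, it satisfies
`E(q z) = (1 - (1 - q) z) E(z)`; iterating, `E(q^N z) = ∏_{k<N} (1 - (1 - q) q^k z) · E(z)`.
Dominated convergence gives `E(q^N z) → E(0) = 1`, so the (convergent) partial products tend to
`E(z)⁻¹`, which in particular forces `E(z) ≠ 0`.
-/

open Filter Topology Finset

noncomputable def qExp (q : ℝ) (z : ℂ) : ℂ := ∑' n : ℕ, z ^ n / (qFact q n : ℂ)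

section

variable {q : ℝ}

lemma qInt_succ_pos (hq : 0 ≤ q) (n : ℕ) : 0 < qInt q (n + 1) := by
  rw [qInt, sum_range_succ']
  positivity

lemma qFact_pos (hq : 0 ≤ q) (n : ℕ) : 0 < qFact q n :=
  prod_pos fun k _ => qInt_succ_pos hq k

lemma qFact_succ (q : ℝ) (n : ℕ) : qFact q (n + 1) = qFact q n * qInt q (n + 1) :=
  prod_range_succ _ _

lemma one_sub_mul_qInt (q : ℝ) (k : ℕ) : (1 - q) * qInt q k = 1 - q ^ k :=
  mul_neg_geom_sum q k

lemma tendsto_qInt (hq0 : 0 ≤ q) (hq1 : q < 1) : Tendsto (qInt q) atTop (𝓝 (1 - q)⁻¹) :=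
  (hasSum_geometric_of_lt_one hq0 hq1).tendsto_sum_nat

lemma pow_succ_div_qFact_succ (q : ℝ) (z : ℂ) (n : ℕ) :
    z ^ (n + 1) / (qFact q (n + 1) : ℂ) =
      z ^ n / (qFact q n : ℂ) * (z / (qInt q (n + 1) : ℂ)) := by
  rw [qFact_succ, Complex.ofReal_mul, pow_succ, mul_div_mul_comm]

lemma norm_ofReal_pow_mul_le (hq0 : 0 ≤ q) (hq1 : q ≤ 1) (N : ℕ) (z : ℂ) :
    ‖(q : ℂ) ^ N * z‖ ≤ ‖z‖ := by
  rw [norm_mul, norm_pow, Complex.norm_of_nonneg hq0]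
  exact mul_le_of_le_one_left (norm_nonneg z) (pow_le_one₀ hq0 hq1)

lemma summable_pow_div_qFact (hq0 : 0 ≤ q) (hq1 : q < 1) {z : ℂ} (hz : ‖z‖ < 1 / (1 - q)) :
    Summable fun n : ℕ => z ^ n / (qFact q n : ℂ) := by
  have hratio : Tendsto (fun n => ‖z‖ / qInt q (n + 1)) atTop (𝓝 (‖z‖ * (1 - q))) := by
    have := (tendsto_const_nhds (x := ‖z‖)).div
      ((tendsto_qInt hq0 hq1).comp (tendsto_add_atTop_nat 1))
      (inv_ne_zero (sub_ne_zero.2 hq1.ne'))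
    rwa [div_inv_eq_mul] at this
  obtain ⟨r, hr, hr1⟩ : ∃ r, ‖z‖ * (1 - q) < r ∧ r < 1 :=
    exists_between (by rwa [lt_div_iff₀ (sub_pos.2 hq1)] at hz)
  refine summable_of_ratio_norm_eventually_le hr1 ?_
  filter_upwards [hratio.eventually (gt_mem_nhds hr)] with n hn
  rw [pow_succ_div_qFact_succ, norm_mul, mul_comm, norm_div, Complex.norm_of_nonneg
    (qInt_succ_pos hq0 n).le]
  exact mul_le_mul_of_nonneg_right hn.le (norm_nonneg _)

lemma qExp_zero (q : ℝ) : qExp q 0 = 1 := by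
  rw [qExp, tsum_eq_single 0 fun n hn => by simp [zero_pow hn]]
  simp [qFact]

lemma pow_succ_div_qFact_sub (hq : 0 ≤ q) (z : ℂ) (n : ℕ) :
    z ^ (n + 1) / (qFact q (n + 1) : ℂ) - ((q : ℂ) * z) ^ (n + 1) / (qFact q (n + 1) : ℂ) =
      (1 - q) * z * (z ^ n / (qFact q n : ℂ)) := by
  have hI : (qInt q (n + 1) : ℂ) ≠ 0 := Complex.ofReal_ne_zero.2 (qInt_succ_pos hq n).ne'
  have hqI : (1 - (q : ℂ)) * qInt q (n + 1) = 1 - (q : ℂ) ^ (n + 1) := by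
    exact_mod_cast one_sub_mul_qInt q (n + 1)
  rw [← sub_div, mul_pow, ← one_sub_mul, ← hqI, mul_div_assoc, pow_succ_div_qFact_succ]
  field_simp

lemma qExp_ofReal_mul (hq0 : 0 ≤ q) (hq1 : q < 1) {z : ℂ} (hz : ‖z‖ < 1 / (1 - q)) :
    qExp q (q * z) = (1 - (1 - q) * z) * qExp q z := by
  have hqz : ‖(q : ℂ) * z‖ < 1 / (1 - q) := by
    simpa using (norm_ofReal_pow_mul_le hq0 hq1.le 1 z).trans_lt hz
  have hs₁ := summable_pow_div_qFact hq0 hq1 hz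
  have hs₂ := summable_pow_div_qFact hq0 hq1 hqz
  have hdiff : qExp q z - qExp q (q * z) = (1 - q) * z * qExp q z := by
    unfold qExp
    rw [← hs₁.tsum_sub hs₂, (hs₁.sub hs₂).tsum_eq_zero_add, ← tsum_mul_left]
    simp only [pow_zero, sub_self, zero_add, pow_succ_div_qFact_sub hq0]
  linear_combination -hdiff

lemma qExp_pow_mul (hq0 : 0 ≤ q) (hq1 : q < 1) {z : ℂ} (hz : ‖z‖ < 1 / (1 - q)) (N : ℕ) :
    qExp q ((q : ℂ) ^ N * z) =
      (∏ k ∈ range N, (1 - (1 - (q : ℂ)) * (q : ℂ) ^ k * z)) * qExp q z := by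
  induction N with
  | zero => simp
  | succ N ih =>
    have hN := (norm_ofReal_pow_mul_le hq0 hq1.le N z).trans_lt hz
    rw [pow_succ', mul_assoc, qExp_ofReal_mul hq0 hq1 hN, ih, prod_range_succ]
    ring

lemma tendsto_qExp_pow_mul (hq0 : 0 ≤ q) (hq1 : q < 1) {z : ℂ} (hz : ‖z‖ < 1 / (1 - q)) :
    Tendsto (fun N : ℕ => qExp q ((q : ℂ) ^ N * z)) atTop (𝓝 1) := by
  have hqN : Tendsto (fun N : ℕ => (q : ℂ) ^ N) atTop (𝓝 0) :=
    tendsto_pow_atTop_nhds_zero_of_norm_lt_one (by rwa [Complex.norm_of_nonneg hq0])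
  rw [← qExp_zero q, ← zero_mul z]
  refine tendsto_tsum_of_dominated_convergence (summable_pow_div_qFact hq0 hq1 hz).norm
    (fun n => ?_) (Eventually.of_forall fun N n => ?_)
  · exact ((continuous_id.mul continuous_const).pow n |>.div_const _).tendsto 0 |>.comp hqN
  · rw [norm_div, norm_div, norm_pow, norm_pow]
    gcongr
    exact norm_ofReal_pow_mul_le hq0 hq1.le N z

end

lemma multipliable_one_sub_mul_pow_mul (a b r : ℂ) (hr : ‖r‖ < 1) :
    Multipliable fun k : ℕ => 1 - a * r ^ k * b := by
  simp_rw [sub_eq_add_neg]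
  refine Complex.multipliable_one_add_of_summable ?_
  simpa [mul_right_comm a] using ((summable_geometric_of_norm_lt_one hr).mul_left (a * b)).neg

/-- For `0 < q < 1` and `|z| < 1/(1-q)`, the series `∑ z^n/[n]_q!` converges and
equals the infinite product `∏_{k=0}^∞ (1 - (1-q) q^k z)⁻¹`. -/
theorem eq_exp_series_eq_prod (q : ℝ) (hq0 : 0 < q) (hq1 : q < 1) (z : ℂ)
    (hz : ‖z‖ < 1 / (1 - q)) :
    Summable (fun n : ℕ => z ^ n / (qFact q n : ℂ)) ∧
      (∑' n : ℕ, z ^ n / (qFact q n : ℂ)) =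
        ∏' k : ℕ, (1 - (1 - (q : ℂ)) * (q : ℂ) ^ k * z)⁻¹ := by
  refine ⟨summable_pow_div_qFact hq0.le hq1 hz, ?_⟩
  have hmul := multipliable_one_sub_mul_pow_mul (1 - q) z q
    (by rwa [Complex.norm_of_nonneg hq0.le])
  have hlim : Tendsto (fun N => (∏ k ∈ range N, (1 - (1 - (q : ℂ)) * (q : ℂ) ^ k * z)) *
      qExp q z) atTop (𝓝 1) := by
    simpa only [qExp_pow_mul hq0.le hq1 hz] using tendsto_qExp_pow_mul hq0.le hq1 hz
  have hprod : (∏' k : ℕ, (1 - (1 - (q : ℂ)) * (q : ℂ) ^ k * z)) * qExp q z = 1 :=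
    tendsto_nhds_unique (hmul.hasProd.tendsto_prod_nat.mul_const _) hlim
  rw [hmul.tprod_inv₀ (left_ne_zero_of_mul_eq_one hprod)]
  exact eq_inv_of_mul_eq_one_right hprod
end

section
/- Let q > 0, q ≠ 1. The radius of convergence of the power series ∑_{n=0}^∞ z^n/{n}_q! equals R_q, where R_q = 2/(1-q) if 0 < q < 1 and R_q = 2q/(q-1) if q > 1. -/
/-- The symbol `{n}_q = 2(1-q^n)/((1-q)(1+q^(n-1)))` (for `n ≥ 1`). -/
noncomputable def qBrace (q : ℝ) (n : ℕ) : ℝ :=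
  2 * (1 - q ^ n) / ((1 - q) * (1 + q ^ (n - 1)))

/-- The factorial `{n}_q! = {1}_q {2}_q ⋯ {n}_q`, with `{0}_q! = 1`. -/
noncomputable def qBraceFact (q : ℝ) (n : ℕ) : ℝ := ∏ k ∈ Finset.range n, qBrace q (k + 1)

/-- The radius `R_q = 2/(1-q)` for `0 < q < 1` and `R_q = 2q/(q-1)` for `q > 1`. -/
noncomputable def Rq (q : ℝ) : ℝ := if q < 1 then 2 / (1 - q) else 2 * q / (q - 1)

/-!
Both `{n}_q` and `R_q` are invariant under `q ↦ q⁻¹`, so we may assume `q < 1`. The ratio of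
consecutive terms of the series is `z / {n+1}_q`, and `{n+1}_q → 2 / (1 - q) = R_q`, so the
ratio test gives convergence inside and divergence outside the disc of radius `R_q`.
-/

open Filter Topology Finset

section RatioTest

variable {𝕜 : Type*} [NormedField 𝕜] (b : ℕ → 𝕜) (z : 𝕜)

lemma pow_div_prod_range_succ (n : ℕ) :
    z ^ (n + 1) / ∏ k ∈ range (n + 1), b k = (z ^ n / ∏ k ∈ range n, b k) * (z / b n) := by
  rw [pow_succ, prod_range_succ, mul_div_mul_comm]

variable {b z} {R : ℝ}

theorem summable_pow_div_prod_range [CompleteSpace 𝕜]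
    (hb : Tendsto (fun n => ‖b n‖) atTop (𝓝 R)) (hz : ‖z‖ < R) :
    Summable fun n => z ^ n / ∏ k ∈ range n, b k := by
  have hR : 0 < R := (norm_nonneg z).trans_lt hz
  have hratio : Tendsto (fun n => ‖z / b n‖) atTop (𝓝 (‖z‖ / R)) := by
    simp only [norm_div]
    exact tendsto_const_nhds.div hb hR.ne'
  obtain ⟨r, hzr, hr1⟩ := exists_between ((div_lt_one hR).2 hz)
  refine summable_of_ratio_norm_eventually_le hr1 ?_
  filter_upwards [hratio.eventually_le_const hzr] with n hn
  rw [pow_div_prod_range_succ, norm_mul, mul_comm]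
  exact mul_le_mul_of_nonneg_right hn (norm_nonneg _)

theorem not_summable_pow_div_prod_range (hb0 : ∀ n, b n ≠ 0)
    (hb : Tendsto (fun n => ‖b n‖) atTop (𝓝 R)) (hR : 0 < R) (hz : R < ‖z‖) :
    ¬ Summable fun n => z ^ n / ∏ k ∈ range n, b k := by
  have hz0 : z ≠ 0 := norm_pos_iff.1 (hR.trans hz)
  refine not_summable_of_ratio_test_tendsto_gt_one ((one_lt_div hR).2 hz) ?_
  have hratio (n : ℕ) :
      ‖z ^ (n + 1) / ∏ k ∈ range (n + 1), b k‖ / ‖z ^ n / ∏ k ∈ range n, b k‖ = ‖z‖ / ‖b n‖ := by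
    have hterm : z ^ n / ∏ k ∈ range n, b k ≠ 0 :=
      div_ne_zero (pow_ne_zero n hz0) (prod_ne_zero_iff.2 fun k _ => hb0 k)
    rw [pow_div_prod_range_succ, norm_mul, mul_div_cancel_left₀ _ (norm_ne_zero_iff.2 hterm),
      norm_div]
  simp only [hratio]
  exact tendsto_const_nhds.div hb hR.ne'

end RatioTest

lemma qBrace_inv_s7 {q : ℝ} (hq : 0 < q) (n : ℕ) : qBrace q⁻¹ n = qBrace q n := by
  rcases eq_or_ne q 1 with rfl | hq1
  · simp
  cases n with
  | zero => simp [qBrace]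
  | succ n =>
    have h1q : 1 - q ≠ 0 := sub_ne_zero.2 hq1.symm
    have h1q' : 1 - q⁻¹ ≠ 0 := sub_ne_zero.2 (inv_ne_one.2 hq1).symm
    simp only [qBrace, Nat.add_sub_cancel, inv_pow]
    rw [div_eq_div_iff (by positivity) (by positivity)]
    field_simp
    ring

lemma qBraceFact_inv {q : ℝ} (hq : 0 < q) (n : ℕ) : qBraceFact q⁻¹ n = qBraceFact q n := by
  simp only [qBraceFact, qBrace_inv_s7 hq]

lemma Rq_inv {q : ℝ} (hq : 0 < q) : Rq q⁻¹ = Rq q := by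
  rcases lt_trichotomy q 1 with h | rfl | h
  · rw [Rq, Rq, if_neg (not_lt.2 ((one_le_inv₀ hq).2 h.le)), if_pos h]
    field_simp
  · simp
  · rw [Rq, Rq, if_pos (inv_lt_one_of_one_lt₀ h), if_neg (not_lt.2 h.le)]
    field_simp

lemma Rq_of_lt_one {q : ℝ} (h : q < 1) : Rq q = 2 / (1 - q) := if_pos h

lemma qBrace_succ_pos {q : ℝ} (hq : 0 < q) (hq1 : q < 1) (n : ℕ) : 0 < qBrace q (n + 1) := by
  have hpow : q ^ (n + 1) < 1 := pow_lt_one₀ hq.le hq1 n.succ_ne_zero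
  exact div_pos (mul_pos two_pos (sub_pos.2 hpow)) (mul_pos (sub_pos.2 hq1) (by positivity))

lemma tendsto_qBrace_succ {q : ℝ} (hq : |q| < 1) :
    Tendsto (fun n => qBrace q (n + 1)) atTop (𝓝 (2 / (1 - q))) := by
  have h0 : Tendsto (fun n : ℕ => q ^ n) atTop (𝓝 0) :=
    tendsto_pow_atTop_nhds_zero_of_abs_lt_one hq
  have h1q : 1 - q ≠ 0 := sub_ne_zero.2 (ne_of_gt (abs_lt.1 hq).2)
  have hlim : Tendsto (fun n => 2 * (1 - q ^ (n + 1)) / ((1 - q) * (1 + q ^ n))) atTop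
      (𝓝 (2 * (1 - 0) / ((1 - q) * (1 + 0)))) :=
    ((tendsto_const_nhds.sub (h0.comp (tendsto_add_atTop_nat 1))).const_mul 2).div
      ((tendsto_const_nhds.add h0).const_mul (1 - q)) (by simpa using h1q)
  simpa [qBrace] using hlim

/-- The radius of convergence of `∑ z^n/{n}_q!` equals `R_q`: the series converges
for `|z| < R_q` and diverges for `|z| > R_q`. -/
theorem improved_qExp_radius (q : ℝ) (hq : 0 < q) (hq1 : q ≠ 1) :
    (∀ z : ℂ, ‖z‖ < Rq q → Summable (fun n : ℕ => z ^ n / (qBraceFact q n : ℂ))) ∧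
    (∀ z : ℂ, Rq q < ‖z‖ → ¬ Summable (fun n : ℕ => z ^ n / (qBraceFact q n : ℂ))) := by
  wlog hlt : q < 1 generalizing q
  · have hgt : 1 < q := lt_of_le_of_ne (not_lt.1 hlt) hq1.symm
    simpa only [qBraceFact_inv hq, Rq_inv hq] using
      this q⁻¹ (inv_pos.2 hq) (inv_ne_one.2 hq1) (inv_lt_one_of_one_lt₀ hgt)
  have hR : 0 < 2 / (1 - q) := div_pos two_pos (sub_pos.2 hlt)
  rw [Rq_of_lt_one hlt]
  have hb : Tendsto (fun n => ‖(qBrace q (n + 1) : ℂ)‖) atTop (𝓝 (2 / (1 - q))) := by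
    simpa only [Complex.norm_real, Real.norm_eq_abs, abs_of_pos hR] using
      (tendsto_qBrace_succ (abs_lt.2 ⟨by linarith, hlt⟩)).abs
  have hcast : ∀ n, (qBraceFact q n : ℂ) = ∏ k ∈ range n, (qBrace q (k + 1) : ℂ) := fun n =>
    Complex.ofReal_prod _ _
  simp only [hcast]
  have hb0 : ∀ n, (qBrace q (n + 1) : ℂ) ≠ 0 := fun n =>
    Complex.ofReal_ne_zero.2 (qBrace_succ_pos hq hlt n).ne'
  exact ⟨fun z hz => summable_pow_div_prod_range hb hz,
    fun z hz => not_summable_pow_div_prod_range hb0 hb hR hz⟩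
end

section
/- For every q > 0 with q ≠ 1 and every natural number n ≥ 1, one has {n}_q = {n}_{1/q}, i.e. 2(1-q^n)/((1-q)(1+q^{n-1})) = 2(1-q^{-n})/((1-q^{-1})(1+q^{-(n-1)})); consequently {n}_q! = {n}_{1/q}! for all n, and hence the power series ∑_{n=0}^∞ z^n/{n}_q! and ∑_{n=0}^∞ z^n/{n}_{1/q}! are identical, so 𝓔_q = 𝓔_{1/q}. -/
/-- The improved q-exponential function `𝓔_q(z) = ∑_{n=0}^∞ z^n/{n}_q!`. -/
noncomputable def impExp (q : ℝ) (z : ℂ) : ℂ := ∑' n : ℕ, z ^ n / (qBraceFact q n : ℂ)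

theorem qBrace_inv_eq (q : ℝ) (n : ℕ) : qBrace q⁻¹ n = qBrace q n := by
  rcases eq_or_ne q 0 with rfl | hq
  · simp
  rcases n with _ | m
  · simp [qBrace]
  have hc : -(q ^ (m + 1))⁻¹ ≠ 0 := by simp [hq]
  calc qBrace q⁻¹ (m + 1)
      = 2 * (1 - q ^ (m + 1)) * -(q ^ (m + 1))⁻¹ /
          ((1 - q) * (1 + q ^ m) * -(q ^ (m + 1))⁻¹) := by
        simp only [qBrace, inv_pow, Nat.add_sub_cancel]
        congr 1 <;> field_simp <;> ring
    _ = qBrace q (m + 1) := mul_div_mul_right _ _ hc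

theorem qBraceFact_inv_eq (q : ℝ) (n : ℕ) : qBraceFact q⁻¹ n = qBraceFact q n :=
  Finset.prod_congr rfl fun k _ => qBrace_inv_eq q (k + 1)

theorem impExp_inv_eq (q : ℝ) : impExp q⁻¹ = impExp q := by
  funext z
  simp only [impExp, qBraceFact_inv_eq]

theorem qBrace_inv_general (q : ℝ) :
    (∀ n : ℕ, 1 ≤ n → qBrace q n = qBrace (1 / q) n) ∧
    (∀ n : ℕ, qBraceFact q n = qBraceFact (1 / q) n) ∧
    (∀ z : ℂ, ∀ n : ℕ, z ^ n / (qBraceFact q n : ℂ) = z ^ n / (qBraceFact (1 / q) n : ℂ)) ∧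
    impExp q = impExp (1 / q) := by
  rw [one_div]
  exact ⟨fun n _ => (qBrace_inv_eq q n).symm, fun n => (qBraceFact_inv_eq q n).symm,
    fun z n => by rw [qBraceFact_inv_eq], (impExp_inv_eq q).symm⟩

/-- `{n}_q = {n}_{1/q}` for `n ≥ 1`, hence `{n}_q! = {n}_{1/q}!` for all `n`, the two
power series have identical terms, and `𝓔_q = 𝓔_{1/q}`. -/
theorem qBrace_inv (q : ℝ) (hq : 0 < q) (hq1 : q ≠ 1) :
    (∀ n : ℕ, 1 ≤ n → qBrace q n = qBrace (1 / q) n) ∧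
    (∀ n : ℕ, qBraceFact q n = qBraceFact (1 / q) n) ∧
    (∀ z : ℂ, ∀ n : ℕ, z ^ n / (qBraceFact q n : ℂ) = z ^ n / (qBraceFact (1 / q) n : ℂ)) ∧
    impExp q = impExp (1 / q) :=
  qBrace_inv_general q
end
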